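/- Validity under imperfect filtering: suppose filtering removes an α_s proportion of hidden human-like spans and mistakenly removes an α_h proportion of machine-indicative spans, where 0 ≤ α_s < α, 0 ≤ α_h < 1-α, and α_s + α_h < 1. Then the imperfectly filtered text has a strictly larger total-variation lower bound (between the filtered machine-generated text distribution and the filtered human-written text distribution) than the original unfiltered text whenever both of the following hold: (i) 1 − α − α_h > (1 − α)·√(1 − α_s − α_h), and (ii) (1/n)·Σ_{j=1}^{L}(c_j − 1)ρ_j < δ·[1 − α − α_h − (1 − α)·√(1 − α_s − α_h)] / (2·(1 − √(1 − α_s − α_h))). -/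
import Mathlib


/-- The total-variation lower bound, between the machine-generated text distribution and the
human-written text distribution, for a text containing `len` sentences of which
`machineCount` are machine-indicative spans, where `δ` is the total variation distance
between the machine and human sentence distributions and `penalty` is the dependency
penalty `Σ_j (c_j − 1)·ρ_j` of the non-IID setting. -/
noncomputable def tvLowerBound (machineCount penalty len δ : ℝ) : ℝ :=
  (machineCount * δ - 2 * penalty) / Real.sqrt len

/-- **Validity under imperfect filtering.** Suppose filtering removes an `α_s` proportion of
hidden human-like spans and mistakenly removes an `α_h` proportion of machine-indicative
spans, where `0 ≤ α_s < α`, `0 ≤ α_h < 1 − α`, and `α_s + α_h < 1`.  The original text has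
`n` sentences of which `(1−α)n` are machine-indicative; the imperfectly filtered text has
`(1−α_s−α_h)n` sentences of which `(1−α−α_h)n` are machine-indicative.  Then the imperfectly
filtered text has a strictly larger total-variation lower bound (between the filtered
machine-generated text distribution and the filtered human-written text distribution) than
the original unfiltered text whenever both
(i) `1 − α − α_h > (1 − α)·√(1 − α_s − α_h)`, and
(ii) `(1/n)·Σ_j (c_j − 1)ρ_j
      < δ·[1 − α − α_h − (1 − α)·√(1 − α_s − α_h)] / (2·(1 − √(1 − α_s − α_h)))` hold. -/
theorem validity_under_imperfect_filtering
    (n : ℕ) (hn : 0 < n) (δ : ℝ) (hδ : 0 < δ)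
    (α αs αh : ℝ) (hα0 : 0 ≤ α) (hα1 : α < 1)
    (hαs0 : 0 ≤ αs) (hαsα : αs < α) (hαh0 : 0 ≤ αh) (hαh1 : αh < 1 - α)
    (hsum : αs + αh < 1)
    (L : ℕ) (c : Fin L → ℕ) (ρ : Fin L → ℝ)
    (hc : ∀ j, 1 ≤ c j) (hρ0 : ∀ j, 0 ≤ ρ j) (hρ1 : ∀ j, ρ j ≤ 1)
    (cond1 : 1 - α - αh > (1 - α) * Real.sqrt (1 - αs - αh))
    (cond2 : (1 / (n : ℝ)) * ∑ j, ((c j : ℝ) - 1) * ρ j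
      < δ * (1 - α - αh - (1 - α) * Real.sqrt (1 - αs - αh))
          / (2 * (1 - Real.sqrt (1 - αs - αh)))) :
    tvLowerBound ((1 - α - αh) * n) (∑ j, ((c j : ℝ) - 1) * ρ j) ((1 - αs - αh) * n) δ
      > tvLowerBound ((1 - α) * n) (∑ j, ((c j : ℝ) - 1) * ρ j) (n : ℝ) δ := by
  set P := ∑ j, ((c j : ℝ) - 1) * ρ j with hP
  set s := Real.sqrt (1 - αs - αh) with hs
  have hne : (0:ℝ) < 1 - αs - αh := by linarith
  have hs0 : 0 < s := Real.sqrt_pos.mpr hne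
  have hα1' : (0:ℝ) < 1 - α := by linarith
  have hs1 : s < 1 := by nlinarith [cond1]
  have htn : (0:ℝ) < (n:ℝ) := Nat.cast_pos.mpr hn
  have ht : 0 < Real.sqrt n := Real.sqrt_pos.mpr htn
  have hsplit : Real.sqrt ((1 - αs - αh) * n) = s * Real.sqrt n := Real.sqrt_mul hne.le _
  have h2pos : (0:ℝ) < 2 * (1 - s) := by linarith
  have c2 : P / n < δ * (1 - α - αh - (1 - α) * s) / (2 * (1 - s)) := by
    rw [div_eq_inv_mul, ← one_div]; exact cond2
  rw [div_lt_div_iff₀ htn h2pos] at c2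
  unfold tvLowerBound
  rw [hsplit, gt_iff_lt, div_lt_div_iff₀ ht (by positivity)]
  have key : s * ((1 - α) * n * δ - 2 * P) < (1 - α - αh) * n * δ - 2 * P := by
    nlinarith [c2]
  nlinarith [mul_lt_mul_of_pos_right key ht]
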